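/- Let G = (Φ, Σ, R, 𝒮) be a deterministic regular tree grammar and consider the recursive bottom-up parser that, on input x(y₁,…,y_k), recursively parses each child y_j to obtain a nonterminal B_j and rule sequence r̄_j, then looks up the (unique) rule r = A → x(B₁,…,B_k) ∈ R and returns (A, (r, r̄₁, …, r̄_k)), failing if no such rule exists. Then a tree x lies in L(G) if and only if the parser succeeds on x and returns a nonterminal S ∈ 𝒮; moreover, in that case the returned rule sequence generates x from S. -/

import Mathlib

structure Rule (N : Type) (α : Type) where
  lhs : N
  sym : α
  rhs : List N
deriving DecidableEq

inductive RTree (α : Type) where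
  | node : α → List (RTree α) → RTree α

def RTree.size {α : Type} : RTree α → Nat
  | .node _ ys => 1 + (ys.attach.map (fun y => RTree.size y.1)).sum
decreasing_by have := List.sizeOf_lt_of_mem y.2; simp only [RTree.node.sizeOf_spec]; omega

def RTree.children {α : Type} : RTree α → List (RTree α)
  | .node _ ys => ys

def RTree.root {α : Type} : RTree α → α
  | .node x _ => x

def RTree.dfs {α : Type} : RTree α → List (RTree α)
  | .node x ys => (ys.attach.map (fun y => RTree.dfs y.1)).flatten ++ [.node x ys]
decreasing_by have := List.sizeOf_lt_of_mem y.2; simp only [RTree.node.sizeOf_spec]; omega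

inductive GenList {N α : Type} (R : Set (Rule N α)) :
    List (Rule N α) → List N → List (RTree α) → Prop where
  | nil : GenList R [] [] []
  | step {r : Rule N α} {rs : List (Rule N α)} {stack : List N}
      {ys ts : List (RTree α)} :
      r ∈ R →
      ys.length = r.rhs.length →
      GenList R rs (r.rhs ++ stack) (ys ++ ts) →
      GenList R (r :: rs) (r.lhs :: stack) (RTree.node r.sym ys :: ts)

def GenSeq {N α : Type} (R : Set (Rule N α)) (rs : List (Rule N α))
    (A : N) (t : RTree α) : Prop :=
  GenList R rs [A] [t]

def Lang {N α : Type} (R : Set (Rule N α)) (A : N) : Set (RTree α) :=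
  {t | ∃ rs, GenSeq R rs A t}

def LangN {N α : Type} (R : Set (Rule N α)) (A : N) (n : Nat) : Set (RTree α) :=
  {t ∈ Lang R A | t.size ≤ n}

def Deterministic {N α : Type} (R : Set (Rule N α)) : Prop :=
  ∀ r ∈ R, ∀ r' ∈ R, r.sym = r'.sym → r.rhs = r'.rhs → r = r'

def parse {N α : Type} [DecidableEq N] [DecidableEq α] (R : List (Rule N α)) :
    RTree α → Option (N × List (Rule N α))
  | RTree.node x ys => do
    let res ← ys.attach.mapM (fun y => parse R y.1)
    match R.find? (fun r => r.sym == x && r.rhs == res.map Prod.fst) with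
    | some r => some (r.lhs, r :: (res.map Prod.snd).flatten)
    | none => none
decreasing_by have := List.sizeOf_lt_of_mem y.2; simp only [RTree.node.sizeOf_spec]; omega


/-! Both directions go by induction on the tree. A derivation of `x(y₁,…,y_k)` from `A` is a rule
`A → x(B₁,…,B_k)` followed by derivations of the `y_j` from the `B_j`, its rule sequence being the
rule followed by the concatenated sequences of the children. The parser's recursive calls recover
exactly these, and by determinism the rule it looks up is the one the derivation used; hence
`parse R t = some (A, rs)` iff `rs` generates `t` from `A`. -/

theorem List.mapM_eq_some_iff_forall₂ {α β : Type*} {f : α → Option β} {l : List α}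
    {res : List β} : l.mapM f = some res ↔ List.Forall₂ (fun a b => f a = some b) l res := by
  induction l generalizing res with
  | nil => simp [eq_comm]
  | cons a l ih => cases res <;> simp [Option.bind_eq_some_iff, ← ih]

theorem List.find?_eq_some_of_unique {α : Type*} {p : α → Bool} {l : List α} {a : α}
    (ha : a ∈ l) (hpa : p a) (huniq : ∀ b ∈ l, p b → b = a) : l.find? p = some a := by
  cases h : l.find? p with
  | none => exact absurd hpa (List.find?_eq_none.1 h a ha)
  | some b => rw [huniq b (List.mem_of_find?_eq_some h) (List.find?_some h)]

theorem List.Forall₂.imp_of_mem {α β : Type*} {P Q : α → β → Prop} {l₁ : List α} {l₂ : List β}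
    (hPQ : ∀ a ∈ l₁, ∀ b, P a b → Q a b) (h : List.Forall₂ P l₁ l₂) : List.Forall₂ Q l₁ l₂ :=
  ((List.forall₂_and_left l₁ l₂).mpr ⟨hPQ, h⟩).imp fun _ _ ⟨ha, hab⟩ => ha _ hab

@[elab_as_elim]
theorem RTree.induction {α : Type} {motive : RTree α → Prop} (t : RTree α)
    (node : ∀ x ys, (∀ y ∈ ys, motive y) → motive (.node x ys)) : motive t :=
  match t with
  | .node x ys => node x ys fun y _ => RTree.induction y node

section Generation

variable {N α : Type} {R : Set (Rule N α)}

theorem GenList.length_eq {rs : List (Rule N α)} {stack : List N} {ts : List (RTree α)}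
    (h : GenList R rs stack ts) : stack.length = ts.length := by
  induction h with
  | nil => rfl
  | step _ hlen _ ih => simp_all

theorem GenList.append {rs₁ rs₂ : List (Rule N α)} {s₁ s₂ : List N} {t₁ t₂ : List (RTree α)}
    (h₁ : GenList R rs₁ s₁ t₁) (h₂ : GenList R rs₂ s₂ t₂) :
    GenList R (rs₁ ++ rs₂) (s₁ ++ s₂) (t₁ ++ t₂) := by
  induction h₁ with
  | nil => simpa
  | step hr hlen _ ih => simpa using GenList.step hr hlen (by simpa using ih)

theorem GenList.exists_split {rs : List (Rule N α)} {stack : List N} {ts : List (RTree α)}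
    (h : GenList R rs stack ts) {s₁ s₂ : List N} {t₁ t₂ : List (RTree α)}
    (hs : stack = s₁ ++ s₂) (ht : ts = t₁ ++ t₂) (hlen : s₁.length = t₁.length) :
    ∃ rs₁ rs₂, rs = rs₁ ++ rs₂ ∧ GenList R rs₁ s₁ t₁ ∧ GenList R rs₂ s₂ t₂ := by
  induction h generalizing s₁ t₁ with
  | nil =>
    obtain ⟨rfl, rfl⟩ := List.append_eq_nil_iff.mp hs.symm
    obtain ⟨rfl, rfl⟩ := List.append_eq_nil_iff.mp ht.symm
    exact ⟨[], [], rfl, .nil, .nil⟩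
  | @step r rs stack ys ts hr hys hgen ih =>
    match s₁, t₁, hlen with
    | [], [], _ =>
      subst hs ht
      exact ⟨[], r :: rs, rfl, .nil, .step hr hys hgen⟩
    | A :: s₁, u :: t₁, hlen =>
      obtain ⟨rfl, rfl⟩ := List.cons_eq_cons.mp hs
      obtain ⟨rfl, rfl⟩ := List.cons_eq_cons.mp ht
      obtain ⟨rs₁, rs₂, rfl, h₁, h₂⟩ :=
        ih (s₁ := r.rhs ++ s₁) (t₁ := ys ++ t₁) (by simp) (by simp) (by simp_all)
      exact ⟨r :: rs₁, rs₂, rfl, .step hr hys h₁, h₂⟩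

theorem genList_iff_forall₂ {rs : List (Rule N α)} {stack : List N} {ts : List (RTree α)} :
    GenList R rs stack ts ↔ ∃ res : List (N × List (Rule N α)),
      List.Forall₂ (fun t p => GenSeq R p.2 p.1 t) ts res ∧
        res.map Prod.fst = stack ∧ (res.map Prod.snd).flatten = rs := by
  constructor
  · intro h
    induction ts generalizing stack rs with
    | nil =>
      obtain rfl : stack = [] := List.eq_nil_of_length_eq_zero h.length_eq
      cases h
      exact ⟨[], .nil, rfl, rfl⟩
    | cons t ts ih =>
      obtain ⟨A, stack, rfl⟩ : ∃ A stack', stack = A :: stack' :=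
        List.exists_cons_of_length_eq_add_one h.length_eq
      obtain ⟨rs₁, rs₂, rfl, h₁, h₂⟩ := h.exists_split (s₁ := [A]) (t₁ := [t]) rfl rfl rfl
      obtain ⟨res, hres, rfl, rfl⟩ := ih h₂
      exact ⟨(A, rs₁) :: res, .cons h₁ hres, rfl, rfl⟩
  · rintro ⟨res, hres, rfl, rfl⟩
    induction hres with
    | nil => exact .nil
    | cons h _ ih => simpa using h.append ih

theorem genSeq_node_iff {rs : List (Rule N α)} {A : N} {x : α} {ys : List (RTree α)} :
    GenSeq R rs A (.node x ys) ↔ ∃ r ∈ R, r.lhs = A ∧ r.sym = x ∧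
      ∃ res : List (N × List (Rule N α)),
        List.Forall₂ (fun y p => GenSeq R p.2 p.1 y) ys res ∧
          res.map Prod.fst = r.rhs ∧ r :: (res.map Prod.snd).flatten = rs := by
  constructor
  · intro h
    cases h with
    | step hr _ hgen =>
      simp only [List.append_nil] at hgen
      obtain ⟨res, hres, hrhs, rfl⟩ := genList_iff_forall₂.mp hgen
      exact ⟨_, hr, rfl, rfl, res, hres, hrhs, rfl⟩
  · rintro ⟨r, hr, rfl, rfl, res, hres, hrhs, rfl⟩
    have hlen : ys.length = r.rhs.length := by rw [hres.length_eq, ← hrhs, List.length_map]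
    have hgen := genList_iff_forall₂.mpr ⟨res, hres, hrhs, rfl⟩
    exact .step hr hlen (by simpa using hgen)

end Generation

section Parsing

variable {N α : Type} [DecidableEq N] [DecidableEq α] {R : List (Rule N α)}

theorem parse_node (x : α) (ys : List (RTree α)) :
    parse R (.node x ys) = (ys.mapM (parse R)).bind fun res =>
      (R.find? fun r => r.sym == x && r.rhs == res.map Prod.fst).map
        fun r => (r.lhs, r :: (res.map Prod.snd).flatten) := by
  rw [parse]
  simp only [List.mapM_subtype, List.unattach_attach]
  congr 1
  funext res
  cases R.find? fun r => r.sym == x && r.rhs == res.map Prod.fst <;> rfl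

theorem genSeq_of_parse_eq_some {t : RTree α} {A : N} {rs : List (Rule N α)}
    (hp : parse R t = some (A, rs)) : GenSeq {r | r ∈ R} rs A t := by
  induction t using RTree.induction generalizing A rs with
  | node x ys ih =>
    simp only [parse_node, Option.bind_eq_some_iff, Option.map_eq_some_iff, Prod.mk.injEq,
      List.mapM_eq_some_iff_forall₂] at hp
    obtain ⟨res, hres, r, hr, rfl, rfl⟩ := hp
    obtain ⟨hsym, hrhs⟩ : r.sym = x ∧ r.rhs = res.map Prod.fst := by
      simpa using List.find?_some hr
    exact genSeq_node_iff.mpr ⟨r, List.mem_of_find?_eq_some hr, rfl, hsym, res,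
      hres.imp_of_mem fun y hy _ => ih y hy, hrhs.symm, rfl⟩

theorem parse_eq_some_of_genSeq (hdet : Deterministic {r | r ∈ R}) {t : RTree α} {A : N}
    {rs : List (Rule N α)} (hg : GenSeq {r | r ∈ R} rs A t) : parse R t = some (A, rs) := by
  induction t using RTree.induction generalizing A rs with
  | node x ys ih =>
    obtain ⟨r, hr, rfl, rfl, res, hres, hrhs, rfl⟩ := genSeq_node_iff.mp hg
    have hparse : ys.mapM (parse R) = some res :=
      List.mapM_eq_some_iff_forall₂.mpr (hres.imp_of_mem fun y hy _ => ih y hy)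
    have hfind : (R.find? fun r' => r'.sym == r.sym && r'.rhs == res.map Prod.fst) = some r :=
      List.find?_eq_some_of_unique hr (by simp [hrhs]) fun r' hr' h' => by
        simp only [Bool.and_eq_true, beq_iff_eq] at h'
        exact hdet r' hr' r hr h'.1 (h'.2.trans hrhs)
    simp [parse_node, hparse, hfind]

theorem parse_eq_some_iff_genSeq (hdet : Deterministic {r | r ∈ R}) {t : RTree α} {A : N}
    {rs : List (Rule N α)} : parse R t = some (A, rs) ↔ GenSeq {r | r ∈ R} rs A t :=
  ⟨genSeq_of_parse_eq_some, parse_eq_some_of_genSeq hdet⟩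

end Parsing

theorem stmt4 {N alpha : Type} [DecidableEq N] [DecidableEq alpha]
    (R : List (Rule N alpha)) (S : Set N)
    (hdet : Deterministic {r | r ∈ R}) (t : RTree alpha) :
    (t ∈ ⋃ s ∈ S, Lang {r | r ∈ R} s ↔
      ∃ (A : N) (rs : List (Rule N alpha)), parse R t = some (A, rs) ∧ A ∈ S) ∧
    (∀ (A : N) (rs : List (Rule N alpha)), parse R t = some (A, rs) → A ∈ S →
      GenSeq {r | r ∈ R} rs A t) := by
  refine ⟨?_, fun A rs hp _ => genSeq_of_parse_eq_some hp⟩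
  simp only [Set.mem_iUnion₂, Lang, Set.mem_ofPred_eq, parse_eq_some_iff_genSeq hdet]
  exact ⟨fun ⟨s, hs, rs, h⟩ => ⟨s, rs, h, hs⟩, fun ⟨s, rs, h, hs⟩ => ⟨s, hs, rs, h⟩⟩
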